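/- arXiv:1711.08555 — 2 statements merged into one kernel-verified Lean document; each statement's English description precedes it below -/
import Mathlib

section
/- Let m ≥ 2 and let T be the perfect unrooted m-ary tree of diameter D. Then for every odd integer t with 1 ≤ t ≤ D, the number of paths of length t in T equals m^((t-1)/2) · (V(D) − V(t−1)), where V(d) is the number of vertices in the perfect unrooted m-ary tree of diameter d. -/
open SimpleGraph Finset

/-- `IsPerfectUnrootedMary m d H` says that `H` is the perfect unrooted `m`-ary tree of
diameter `d`: a tree in which every vertex has degree `1` or `m + 1`, whose maximum
distance between two vertices is `d`, and in which every degree-`1` vertex is at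
distance `d` from some other vertex.  (For `d = 0` the degree condition is dropped,
so that the one-vertex tree is the perfect tree of diameter `0`.) -/
def IsPerfectUnrootedMary (m d : ℕ) {W : Type} [Fintype W] (H : SimpleGraph W)
    [DecidableRel H.Adj] : Prop :=
  H.IsTree ∧
    (0 < d → ∀ v : W, H.degree v = 1 ∨ H.degree v = m + 1) ∧
    (∀ u v : W, H.dist u v ≤ d) ∧
    (∃ u v : W, H.dist u v = d) ∧
    (∀ v : W, H.degree v = 1 → ∃ u : W, H.dist u v = d)

/-- The number of paths of length `t` in `H`, i.e. the number of unordered pairs of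
vertices at distance exactly `t` from each other. -/
noncomputable def pathCount {W : Type} [Fintype W] [DecidableEq W] (H : SimpleGraph W) (t : ℕ) : ℕ :=
  (Finset.univ.filter fun p : Sym2 W => ∃ u v : W, p = s(u, v) ∧ H.dist u v = t).card

/-!
Let `x` be the middle vertex of a longest path, so that every vertex lies within distance
`⌈D/2⌉` of `x`, and write `t = 2k + 1`. Orient each path of length `t` towards its endpoint
farther from `x` (the two endpoints are at distances of different parity from `x`). That far
endpoint `v` satisfies `d(x, v) > k`, and the middle edge `pq` of the path is the edge on the
way from `v` to `x` with `d(q, v) = k`; the near endpoint is then any vertex at depth `k` in the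
branch at `p` away from `q`. Perfectness makes that branch full, with `m ^ k` such vertices, so
the number of paths is `m ^ k * #{v | k < d(x, v)}`. Finally the ball of radius `k` about `x`
is itself the perfect tree of diameter `2k = t - 1`, so it has `V(t - 1)` vertices.
-/

namespace SimpleGraph

variable {V : Type*} {G : SimpleGraph V}

theorem Connected.exists_dist_eq_dist_eq (hG : G.Connected) {u v : V} {i j : ℕ}
    (h : G.dist u v = i + j) : ∃ w, G.dist u w = i ∧ G.dist w v = j := by
  obtain ⟨p, hp⟩ := hG.exists_walk_length_eq_dist u v
  have hu : G.dist u (p.getVert i) ≤ i :=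
    (dist_le (p.take i)).trans (by simp [Walk.take_length])
  have hv : G.dist (p.getVert i) v ≤ j :=
    (dist_le (p.drop i)).trans (by simp [Walk.drop_length]; omega)
  have := hG.dist_triangle (u := u) (v := p.getVert i) (w := v)
  exact ⟨p.getVert i, by omega, by omega⟩

theorem Connected.exists_adj_dist_eq_dist_eq (hG : G.Connected) {u v : V} {i j : ℕ}
    (h : G.dist u v = i + 1 + j) : ∃ p q, G.Adj p q ∧ G.dist u p = i ∧ G.dist q v = j := by
  obtain ⟨p, hup, hpv⟩ :=
    hG.exists_dist_eq_dist_eq (u := u) (v := v) (i := i) (j := 1 + j) (by omega)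
  obtain ⟨q, hpq, hqv⟩ := hG.exists_dist_eq_dist_eq hpv
  exact ⟨p, q, dist_eq_one_iff_adj.mp hpq, hup, hqv⟩

theorem IsAcyclic.eq_of_isPath (hG : G.IsAcyclic) {u v : V} {p q : G.Walk u v} (hp : p.IsPath)
    (hq : q.IsPath) : p = q :=
  Subtype.mk.inj <| (hG.subsingleton_path u v).elim ⟨p, hp⟩ ⟨q, hq⟩

namespace IsTree

theorem length_eq_dist (hT : G.IsTree) {u v : V} {p : G.Walk u v} (hp : p.IsPath) :
    p.length = G.dist u v := by
  obtain ⟨q, hq, hql⟩ := hT.connected.exists_path_of_dist u v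
  rw [hT.isAcyclic.eq_of_isPath hp hq, hql]

theorem dist_add_dist_of_mem_support (hT : G.IsTree) {u v w : V} {p : G.Walk u v}
    (hp : p.IsPath) (hw : w ∈ p.support) : G.dist u w + G.dist w v = G.dist u v := by
  classical
  rw [← hT.length_eq_dist (hp.takeUntil hw), ← hT.length_eq_dist (hp.dropUntil hw),
    ← hT.length_eq_dist hp, ← Walk.length_append, Walk.take_spec]

theorem mem_support_of_dist_add_dist (hT : G.IsTree) {u v w : V} {p : G.Walk u v}
    (hp : p.IsPath) (h : G.dist u w + G.dist w v = G.dist u v) : w ∈ p.support := by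
  obtain ⟨a, ha⟩ := hT.connected.exists_walk_length_eq_dist u w
  obtain ⟨b, hb⟩ := hT.connected.exists_walk_length_eq_dist w v
  have hab : (a.append b).IsPath :=
    (a.append b).isPath_of_length_eq_dist (by rw [Walk.length_append, ha, hb, h])
  rw [hT.isAcyclic.eq_of_isPath hp hab, Walk.mem_support_append_iff]
  exact Or.inl a.end_mem_support

theorem eq_of_dist_add_dist (hT : G.IsTree) {u v w w' : V}
    (hw : G.dist u w + G.dist w v = G.dist u v) (hw' : G.dist u w' + G.dist w' v = G.dist u v)
    (h : G.dist u w = G.dist u w') : w = w' := by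
  classical
  obtain ⟨p, hp, -⟩ := hT.connected.exists_path_of_dist u v
  have hvert : ∀ y, G.dist u y + G.dist y v = G.dist u v → p.getVert (G.dist u y) = y := by
    intro y hy
    have hmem := hT.mem_support_of_dist_add_dist hp hy
    rw [← hT.length_eq_dist (hp.takeUntil hmem)]
    exact p.getVert_length_takeUntil hmem
  rw [← hvert w hw, ← hvert w' hw', h]

theorem dist_eq_add_one_or (hT : G.IsTree) {p q : V} (hpq : G.Adj p q) (u : V) :
    G.dist q u = G.dist p u + 1 ∨ G.dist p u = G.dist q u + 1 := by
  have hne : G.dist p u ≠ G.dist q u := by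
    intro heq
    obtain ⟨P, hP, hPl⟩ := hT.connected.exists_path_of_dist p u
    by_cases hq : q ∈ P.support
    · have := hT.dist_add_dist_of_mem_support hP hq
      rw [dist_eq_one_iff_adj.mpr hpq] at this
      omega
    · have := hT.length_eq_dist (hP.cons hq (h := hpq.symm))
      rw [Walk.length_cons] at this
      omega
  rcases hpq.diff_dist_adj (u := u) with h | h | h <;> grind [dist_comm]

theorem dist_add_dist_or (hT : G.IsTree) {a b y : V} (hy : G.dist a y + G.dist y b = G.dist a b)
    (z : V) : G.dist z y + G.dist y a = G.dist z a ∨ G.dist z y + G.dist y b = G.dist z b := by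
  classical
  obtain ⟨P, hP, -⟩ := hT.connected.exists_path_of_dist a b
  obtain ⟨A, hA, -⟩ := hT.connected.exists_path_of_dist z a
  obtain ⟨B, hB, -⟩ := hT.connected.exists_path_of_dist z b
  have hyP := hT.mem_support_of_dist_add_dist hP hy
  rw [hT.isAcyclic.eq_of_isPath hP (A.reverse.append B).bypass_isPath] at hyP
  have := Walk.support_bypass_subset_support _ hyP
  rw [Walk.mem_support_append_iff, Walk.support_reverse, List.mem_reverse] at this
  exact this.imp (hT.dist_add_dist_of_mem_support hA) (hT.dist_add_dist_of_mem_support hB)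

theorem dist_le_max_of_dist_add_dist (hT : G.IsTree) {u v w : V}
    (hw : G.dist u w + G.dist w v = G.dist u v) (x : V) :
    G.dist x w ≤ max (G.dist x u) (G.dist x v) := by
  rcases hT.dist_add_dist_or hw x with h | h <;> grind [dist_comm]

theorem dist_eq_of_adj_of_dist_lt (hT : G.IsTree) {p q u v : V} (hpq : G.Adj p q)
    (hu : G.dist p u < G.dist q u) (hv : G.dist q v < G.dist p v) :
    G.dist u v = G.dist p u + 1 + G.dist q v := by
  have hpu := hT.dist_eq_add_one_or hpq u
  have hpv := hT.dist_eq_add_one_or hpq v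
  have hp : G.dist u p + G.dist p q = G.dist u q := by
    rw [dist_eq_one_iff_adj.mpr hpq, dist_comm (u := u), dist_comm (u := u)]
    omega
  rcases hT.dist_add_dist_or hp v with h | h <;> grind [dist_comm]

theorem even_dist_add_dist_add_dist (hT : G.IsTree) (x u v : V) :
    Even (G.dist x u + G.dist x v + G.dist u v) := by
  suffices ∀ {u} (p : G.Walk u v), Even (G.dist x u + G.dist x v + p.length) by
    obtain ⟨p, hp⟩ := hT.connected.exists_walk_length_eq_dist u v
    simpa [hp] using this p
  intro u p
  induction p with
  | nil => simp
  | cons h p ih =>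
    rw [Walk.length_cons, Nat.even_iff] at *
    rcases hT.dist_eq_add_one_or h x with h | h <;> grind [dist_comm]

theorem exists_forall_two_mul_dist_le (hT : G.IsTree) {D : ℕ} (hD : ∀ u v, G.dist u v ≤ D)
    {a b : V} (hab : G.dist a b = D) : ∃ x, ∀ z, 2 * G.dist x z ≤ D + 1 := by
  obtain ⟨x, hax, hxb⟩ := hT.connected.exists_dist_eq_dist_eq (i := D / 2) (j := D - D / 2)
    (hab.trans (by omega))
  refine ⟨x, fun z => ?_⟩
  have := hD z a
  have := hD z b
  rcases hT.dist_add_dist_or (a := a) (b := b) (y := x) (by omega) z with h | h <;>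
    grind [dist_comm]

theorem card_neighborFinset_filter_dist_add_one (hT : G.IsTree) [G.LocallyFinite] {s w : V}
    (hw : w ≠ s) : #{z ∈ G.neighborFinset w | G.dist s z + 1 = G.dist s w} = 1 := by
  have hpos := hT.connected.pos_dist_of_ne hw.symm
  obtain ⟨p, q, hpq, hp, hq⟩ := hT.connected.exists_adj_dist_eq_dist_eq (u := s) (v := w)
    (i := G.dist s w - 1) (j := 0) (by omega)
  obtain rfl : q = w := hT.connected.dist_eq_zero_iff.mp hq
  rw [card_eq_one]
  refine ⟨p, ext fun z => ?_⟩
  simp only [mem_filter, mem_neighborFinset, mem_singleton]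
  constructor
  · rintro ⟨hz, hzd⟩
    refine hT.eq_of_dist_add_dist (u := s) (v := q) ?_ ?_ (by omega)
    · rw [dist_eq_one_iff_adj.mpr hz.symm]; omega
    · rw [dist_eq_one_iff_adj.mpr hpq]; omega
  · rintro rfl
    exact ⟨hpq.symm, by omega⟩

theorem card_neighborFinset_filter_dist_eq_add_one (hT : G.IsTree) [G.LocallyFinite] {s w : V}
    (hw : w ≠ s) :
    #{z ∈ G.neighborFinset w | G.dist s z = G.dist s w + 1} = G.degree w - 1 := by
  rw [← card_neighborFinset_eq_degree, ← card_filter_add_card_filter_not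
    (s := G.neighborFinset w) (fun z => G.dist s z + 1 = G.dist s w),
    hT.card_neighborFinset_filter_dist_add_one hw, Nat.add_sub_cancel_left]
  refine congrArg card (filter_congr fun z hz => ?_)
  rcases hT.dist_eq_add_one_or ((mem_neighborFinset _ _ _).mp hz) s with h | h <;>
    grind [dist_comm]

variable {s : Set V}

theorem exists_walk_induce (hT : G.IsTree)
    (hs : ∀ u ∈ s, ∀ v ∈ s, ∀ w, G.dist u w + G.dist w v = G.dist u v → w ∈ s)
    (u v : s) :
    ∃ q : (G.induce s).Walk u v, q.length = G.dist u v := by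
  obtain ⟨p, hp, hpl⟩ := hT.connected.exists_path_of_dist (u : V) v
  have hps : ∀ w ∈ p.support, w ∈ s :=
    fun w hw => hs u u.2 v v.2 w (hT.dist_add_dist_of_mem_support hp hw)
  refine ⟨p.induce s hps, ?_⟩
  rw [← hpl, ← Walk.length_map (Embedding.induce s).toHom, Walk.map_induce]
  rfl

theorem dist_induce (hT : G.IsTree)
    (hs : ∀ u ∈ s, ∀ v ∈ s, ∀ w, G.dist u w + G.dist w v = G.dist u v → w ∈ s)
    (u v : s) :
    (G.induce s).dist u v = G.dist u v := by
  obtain ⟨q, hq⟩ := hT.exists_walk_induce hs u v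
  obtain ⟨r, hr⟩ := q.reachable.exists_walk_length_eq_dist
  refine le_antisymm (hq ▸ dist_le q) ?_
  rw [← hr, ← Walk.length_map (Embedding.induce s).toHom]
  exact dist_le _

protected theorem induce (hT : G.IsTree)
    (hs : ∀ u ∈ s, ∀ v ∈ s, ∀ w, G.dist u w + G.dist w v = G.dist u v → w ∈ s)
    (hne : s.Nonempty) : (G.induce s).IsTree :=
  ⟨(connected_iff _).mpr ⟨fun u v => (hT.exists_walk_induce hs u v).elim fun q _ => q.reachable,
    hne.to_subtype⟩, hT.isAcyclic.induce s⟩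

theorem degree_induce_of_dist_eq [Fintype V] [DecidableRel G.Adj] (hT : G.IsTree) {x v : V}
    {k : ℕ} (hk : k ≠ 0) (hv : G.dist x v = k) :
    (G.induce {w | G.dist x w ≤ k}).degree ⟨v, hv.le⟩ = 1 := by
  classical
  rw [← card_neighborFinset_eq_degree, ← card_map (Function.Embedding.subtype _),
    map_neighborFinset_induce, ← hT.card_neighborFinset_filter_dist_add_one (s := x) (w := v)
      (by rintro rfl; simp at hv; omega)]
  congr 1
  ext z
  simp only [mem_inter, mem_filter, mem_neighborFinset, Set.mem_toFinset, Set.mem_ofPred_eq]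
  refine and_congr_right fun hvz => ?_
  rcases hT.dist_eq_add_one_or hvz x with h | h <;> grind [dist_comm]

end IsTree

section branchLevel

variable [Fintype V]

/-- For adjacent `r` and `s`: the vertices at depth `j` in the branch at `r` pointing away
from `s`. -/
noncomputable def branchLevel (G : SimpleGraph V) (r s : V) (j : ℕ) : Finset V :=
  {w | G.dist r w = j ∧ G.dist s w = j + 1}

variable {r s w : V} {j k m : ℕ}

theorem mem_branchLevel : w ∈ G.branchLevel r s j ↔ G.dist r w = j ∧ G.dist s w = j + 1 := by
  simp [branchLevel]

theorem branchLevel_zero (hG : G.Connected) (hrs : G.Adj r s) : G.branchLevel r s 0 = {r} := by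
  ext w
  rw [mem_branchLevel, mem_singleton, hG.dist_eq_zero_iff]
  constructor
  · exact fun h => h.1.symm
  · rintro rfl
    exact ⟨rfl, dist_eq_one_iff_adj.mpr hrs.symm⟩

/-- Double counting the edges between consecutive levels: each vertex of level `j` has `m`
neighbours in level `j + 1`, and each vertex of level `j + 1` has one neighbour in level `j`. -/
theorem card_branchLevel_succ [DecidableRel G.Adj] (hT : G.IsTree) (hrs : G.Adj r s)
    (hdeg : ∀ w ∈ G.branchLevel r s j, G.degree w = m + 1) :
    #(G.branchLevel r s (j + 1)) = #(G.branchLevel r s j) * m := by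
  have hrs' : G.dist s r = 1 := dist_eq_one_iff_adj.mpr hrs.symm
  have tri (a b c : V) := hT.connected.dist_triangle (u := a) (v := b) (w := c)
  refine ((card_mul_eq_card_mul G.Adj (fun w hw => ?_) (fun z hz => ?_)).trans (mul_one _)).symm
  · rw [mem_branchLevel] at hw
    have : (G.branchLevel r s (j + 1)).bipartiteAbove G.Adj w =
        {z ∈ G.neighborFinset w | G.dist s z = G.dist s w + 1} := by
      ext z
      simp only [mem_bipartiteAbove, mem_branchLevel, mem_filter, mem_neighborFinset]
      constructor
      · rintro ⟨⟨-, hz⟩, hwz⟩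
        exact ⟨hwz, by omega⟩
      · rintro ⟨hwz, hz⟩
        have := tri r w z
        have := tri s r z
        rw [dist_eq_one_iff_adj.mpr hwz] at *
        exact ⟨⟨by omega, by omega⟩, hwz⟩
    rw [this, hT.card_neighborFinset_filter_dist_eq_add_one, hdeg w (mem_branchLevel.mpr hw),
      Nat.add_sub_cancel]
    rintro rfl
    simp at hw
  · rw [mem_branchLevel] at hz
    have : (G.branchLevel r s j).bipartiteBelow G.Adj z =
        {w ∈ G.neighborFinset z | G.dist r w + 1 = G.dist r z} := by
      ext w
      simp only [mem_bipartiteBelow, mem_branchLevel, mem_filter, mem_neighborFinset]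
      constructor
      · rintro ⟨⟨hw, -⟩, hwz⟩
        exact ⟨hwz.symm, by omega⟩
      · rintro ⟨hzw, hw⟩
        have := tri s r w
        have := tri s w z
        rw [dist_eq_one_iff_adj.mpr hzw.symm] at *
        exact ⟨⟨by omega, by omega⟩, hzw.symm⟩
    rw [this, hT.card_neighborFinset_filter_dist_add_one]
    rintro rfl
    simp at hz

theorem card_branchLevel [DecidableRel G.Adj] (hT : G.IsTree) (hrs : G.Adj r s)
    (hdeg : ∀ j < k, ∀ w ∈ G.branchLevel r s j, G.degree w = m + 1) :
    #(G.branchLevel r s k) = m ^ k := by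
  induction k with
  | zero => simp [branchLevel_zero hT.connected hrs]
  | succ k ih =>
    rw [card_branchLevel_succ hT hrs (hdeg k k.lt_succ_self), ih fun j hj => hdeg j (by omega),
      pow_succ]

theorem Connected.exists_adj_mem_branchLevel (hG : G.Connected) {x v : V}
    (hv : k < G.dist x v) :
    ∃ p q, G.Adj p q ∧ G.dist p x < G.dist q x ∧ v ∈ G.branchLevel q p k := by
  obtain ⟨p, q, hpq, hp, hq⟩ := hG.exists_adj_dist_eq_dist_eq (u := x) (v := v)
    (i := G.dist x v - k - 1) (j := k) (by omega)
  have := hG.dist_triangle (u := x) (v := q) (w := v)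
  have := hG.dist_triangle (u := x) (v := p) (w := q)
  have := hG.dist_triangle (u := p) (v := q) (w := v)
  have := hG.dist_triangle (u := x) (v := p) (w := v)
  rw [dist_eq_one_iff_adj.mpr hpq] at *
  refine ⟨p, q, hpq, ?_, mem_branchLevel.mpr ⟨hq, ?_⟩⟩ <;> grind [dist_comm]

namespace IsTree

theorem eq_and_eq_of_mem_branchLevel (hT : G.IsTree) {x v p q p' q' : V} (hpq : G.Adj p q)
    (hpx : G.dist p x < G.dist q x) (hv : v ∈ G.branchLevel q p k) (hpq' : G.Adj p' q')
    (hpx' : G.dist p' x < G.dist q' x) (hv' : v ∈ G.branchLevel q' p' k) :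
    p = p' ∧ q = q' := by
  rw [mem_branchLevel] at hv hv'
  have hxv := hT.dist_eq_of_adj_of_dist_lt hpq hpx (v := v) (by omega)
  have hxv' := hT.dist_eq_of_adj_of_dist_lt hpq' hpx' (v := v) (by omega)
  have hqx := (hT.dist_eq_add_one_or hpq x).resolve_right (by omega)
  have hqx' := (hT.dist_eq_add_one_or hpq' x).resolve_right (by omega)
  exact ⟨hT.eq_of_dist_add_dist (u := v) (v := x) (by grind [dist_comm])
      (by grind [dist_comm]) (by grind [dist_comm]),
    hT.eq_of_dist_add_dist (u := v) (v := x) (by grind [dist_comm])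
      (by grind [dist_comm]) (by grind [dist_comm])⟩

/-- If `x` were on the side of `q`, then `u` would be farther from `x` than `v`. -/
theorem exists_middle_edge (hT : G.IsTree) {x u v : V} (huv : G.dist u v = 2 * k + 1)
    (hxu : G.dist x u < G.dist x v) :
    ∃ p q, G.Adj p q ∧ G.dist p x < G.dist q x ∧ u ∈ G.branchLevel p q k ∧
      v ∈ G.branchLevel q p k := by
  have tri (a b c : V) := hT.connected.dist_triangle (u := a) (v := b) (w := c)
  obtain ⟨p, q, hpq, hup, hqv⟩ := hT.connected.exists_adj_dist_eq_dist_eq (u := u) (v := v)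
    (i := k) (j := k) (by omega)
  have := tri u q v
  have := tri u p q
  have := tri u p v
  have := tri p q v
  rw [dist_eq_one_iff_adj.mpr hpq] at *
  refine ⟨p, q, hpq, ?_, mem_branchLevel.mpr ⟨by grind [dist_comm], by grind [dist_comm]⟩,
    mem_branchLevel.mpr ⟨by grind [dist_comm], by grind [dist_comm]⟩⟩
  rcases hT.dist_eq_add_one_or hpq x with h | h
  · omega
  · have := hT.dist_eq_of_adj_of_dist_lt hpq.symm (u := x) (v := u) (by omega)
      (by grind [dist_comm])
    have := tri x q v
    grind [dist_comm]

theorem dist_eq_and_dist_lt_iff (hT : G.IsTree) {p q x u v : V} (hpq : G.Adj p q)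
    (hpx : G.dist p x < G.dist q x) (hv : v ∈ G.branchLevel q p k) :
    G.dist u v = 2 * k + 1 ∧ G.dist x u < G.dist x v ↔ u ∈ G.branchLevel p q k := by
  constructor
  · rintro ⟨huv, hxu⟩
    obtain ⟨p', q', hpq', hpx', hu, hv'⟩ := hT.exists_middle_edge huv hxu
    obtain ⟨rfl, rfl⟩ := hT.eq_and_eq_of_mem_branchLevel hpq hpx hv hpq' hpx' hv'
    exact hu
  · intro hu
    rw [mem_branchLevel] at hu hv
    have := hT.dist_eq_of_adj_of_dist_lt hpq (u := u) (v := v) (by omega) (by omega)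
    have := hT.dist_eq_of_adj_of_dist_lt hpq hpx (v := v) (by omega)
    have := hT.connected.dist_triangle (u := x) (v := p) (w := u)
    grind [dist_comm]

end IsTree

end branchLevel

end SimpleGraph

theorem SimpleGraph.IsTree.pathCount_eq_card {W : Type} [Fintype W] [DecidableEq W]
    {G : SimpleGraph W} (hT : G.IsTree) (x : W) {t : ℕ} (ht : Odd t) :
    pathCount G t = #{e : W × W | G.dist e.1 e.2 = t ∧ G.dist x e.1 < G.dist x e.2} := by
  symm
  refine card_bij (fun e _ => s(e.1, e.2)) ?_ ?_ ?_
  · rintro ⟨u, v⟩ he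
    simp only [mem_filter, mem_univ, true_and] at he ⊢
    exact ⟨u, v, rfl, he.1⟩
  · rintro ⟨u, v⟩ he ⟨u', v'⟩ he' h
    simp only [mem_filter, mem_univ, true_and] at he he'
    dsimp only at h
    rcases Sym2.eq_iff.mp h with ⟨rfl, rfl⟩ | ⟨rfl, rfl⟩
    · rfl
    · omega
  · intro z hz
    simp only [mem_filter, mem_univ, true_and] at hz
    obtain ⟨u, v, rfl, huv⟩ := hz
    have hne : G.dist x u ≠ G.dist x v := by
      have := Nat.even_iff.mp (hT.even_dist_add_dist_add_dist x u v)
      have := Nat.odd_iff.mp ht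
      omega
    rcases hne.lt_or_gt with h | h
    · exact ⟨(u, v), by simp [huv, h], rfl⟩
    · exact ⟨(v, u), by simp [SimpleGraph.dist_comm, huv, h], Sym2.eq_swap⟩

namespace IsPerfectUnrootedMary

variable {W : Type} [Fintype W] {G : SimpleGraph W} [DecidableRel G.Adj] {m D k : ℕ} {x : W}

theorem degree_eq_of_forall_dist_lt (hG : IsPerfectUnrootedMary m D G) {w : W}
    (hw : ∀ z, G.dist w z < D) : G.degree w = m + 1 := by
  obtain ⟨-, hdeg, -, -, hleaf⟩ := hG
  refine (hdeg (by simpa using hw w) w).resolve_left fun h => ?_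
  obtain ⟨u, hu⟩ := hleaf w h
  exact (hw u).ne (by rw [SimpleGraph.dist_comm, hu])

theorem degree_eq_of_dist_lt (hG : IsPerfectUnrootedMary m D G) (hx : ∀ z, G.dist x z + k ≤ D)
    {w : W} (hw : G.dist x w < k) : G.degree w = m + 1 :=
  hG.degree_eq_of_forall_dist_lt fun z => by
    have := hx z
    have := hG.1.connected.dist_triangle (u := w) (v := x) (w := z)
    rw [SimpleGraph.dist_comm (u := w) (v := x)] at this
    omega

/-- A vertex of depth `< k` in this branch is not a leaf: it is within distance `< D` of the
vertices on the side of `q` because of the bound at `x`, and of those on the side of `p`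
because of `v`. -/
theorem card_branchLevel_of_mem (hG : IsPerfectUnrootedMary m D G)
    (hx : ∀ z, G.dist x z + k ≤ D) {p q v : W} (hpq : G.Adj p q)
    (hpx : G.dist p x < G.dist q x) (hv : v ∈ G.branchLevel q p k) :
    #(G.branchLevel p q k) = m ^ k := by
  have hT := hG.1
  have tri (a b c : W) := hT.connected.dist_triangle (u := a) (v := b) (w := c)
  rw [mem_branchLevel] at hv
  refine card_branchLevel hT hpq fun j hj w hw => hG.degree_eq_of_forall_dist_lt fun z => ?_
  rw [mem_branchLevel] at hw
  rcases hT.dist_eq_add_one_or hpq z with hz | hz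
  · have := hT.dist_eq_of_adj_of_dist_lt hpq.symm (u := v) (v := z) (by omega) (by omega)
    have := hG.2.2.1 v z
    have := tri w p z
    grind [SimpleGraph.dist_comm]
  · have := hT.dist_eq_of_adj_of_dist_lt hpq (u := x) (v := z) hpx (by omega)
    have := hx z
    have := tri w q z
    grind [SimpleGraph.dist_comm]

theorem pathCount_eq [DecidableEq W] (hG : IsPerfectUnrootedMary m D G)
    (hx : ∀ z, G.dist x z + k ≤ D) :
    pathCount G (2 * k + 1) = m ^ k * #{v | k < G.dist x v} := by
  have hT := hG.1
  rw [hT.pathCount_eq_card x (odd_two_mul_add_one k),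
    card_eq_sum_card_fiberwise (f := Prod.snd) (t := {v | k < G.dist x v}) ?_,
    sum_const_nat fun v hv => ?_, mul_comm]
  · rw [mem_filter] at hv
    obtain ⟨p, q, hpq, hpx, hvq⟩ := hT.connected.exists_adj_mem_branchLevel hv.2
    have hfibre : ({e ∈ {e : W × W | G.dist e.1 e.2 = 2 * k + 1 ∧
        G.dist x e.1 < G.dist x e.2} | e.2 = v} : Finset (W × W)) =
        G.branchLevel p q k ×ˢ {v} := by
      ext ⟨u, v'⟩
      simp only [mem_filter, mem_univ, true_and, mem_product, mem_singleton]
      constructor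
      · rintro ⟨h, rfl⟩
        exact ⟨(hT.dist_eq_and_dist_lt_iff hpq hpx hvq).mp h, rfl⟩
      · rintro ⟨h, rfl⟩
        exact ⟨(hT.dist_eq_and_dist_lt_iff hpq hpx hvq).mpr h, rfl⟩
    rw [hfibre, card_product, card_singleton, mul_one, hG.card_branchLevel_of_mem hx hpq hpx hvq]
  · rintro ⟨u, v⟩ h
    simp only [coe_filter, mem_univ, true_and, Set.mem_ofPred_eq] at h ⊢
    have := hT.connected.dist_triangle (u := u) (v := x) (w := v)
    rw [SimpleGraph.dist_comm (u := u) (v := x)] at this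
    omega

theorem exists_dist_eq_of_adj (hG : IsPerfectUnrootedMary m D G) (hm : 0 < m)
    (hx : ∀ z, G.dist x z + k ≤ D) {y : W} (hy : G.Adj x y) (hk : k ≠ 0) :
    ∃ b, G.dist y b + 1 = k ∧ G.dist x b = k := by
  have hcard := card_branchLevel hG.1 hy.symm (k := k - 1) fun j hj w hw =>
    hG.degree_eq_of_dist_lt hx (by rw [mem_branchLevel] at hw; omega)
  obtain ⟨b, hb⟩ := card_pos.mp (hcard ▸ Nat.pow_pos hm)
  rw [mem_branchLevel] at hb
  exact ⟨b, by omega, by omega⟩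

theorem exists_dist_eq (hG : IsPerfectUnrootedMary m D G) (hm : 0 < m)
    (hx : ∀ z, G.dist x z + k ≤ D) : ∃ a, G.dist x a = k := by
  rcases Nat.eq_zero_or_pos k with rfl | hk
  · exact ⟨x, by simp⟩
  obtain ⟨y, hy⟩ := (G.degree_pos_iff_exists_adj x).mp
    (by rw [hG.degree_eq_of_dist_lt hx (by simpa using hk)]; omega)
  obtain ⟨a, -, ha⟩ := hG.exists_dist_eq_of_adj hm hx hy hk.ne'
  exact ⟨a, ha⟩

theorem exists_dist_eq_two_mul (hG : IsPerfectUnrootedMary m D G) (hm : 0 < m)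
    (hx : ∀ z, G.dist x z + k ≤ D) {v : W} (hv : G.dist x v = k) :
    ∃ b, G.dist x b = k ∧ G.dist v b = 2 * k := by
  rcases Nat.eq_zero_or_pos k with rfl | hk
  · exact ⟨v, hv, by simp⟩
  have hT := hG.1
  obtain ⟨x', y₁, hxy₁, hx', hy₁v⟩ :=
    hT.connected.exists_adj_dist_eq_dist_eq (u := x) (v := v) (i := 0) (j := k - 1) (by omega)
  obtain rfl := hT.connected.dist_eq_zero_iff.mp hx'
  have hdeg : 1 < #(G.neighborFinset x) := by
    rw [card_neighborFinset_eq_degree, hG.degree_eq_of_dist_lt hx (by simpa using hk)]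
    omega
  obtain ⟨y₂, hy₂, hne⟩ := exists_mem_ne hdeg y₁
  rw [mem_neighborFinset] at hy₂
  obtain ⟨b, hby, hbx⟩ := hG.exists_dist_eq_of_adj hm hx hy₂ hk.ne'
  have hxy₁' : G.dist x y₁ = 1 := dist_eq_one_iff_adj.mpr hxy₁
  have hxy₂' : G.dist x y₂ = 1 := dist_eq_one_iff_adj.mpr hy₂
  -- `y₁` is the only neighbour of `x` closer to `v`, so `b` and `v` are separated by `x y₂`
  have hvy₂ : G.dist y₂ v = k + 1 := by
    rcases hT.dist_eq_add_one_or hy₂ v with h | h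
    · omega
    · exact absurd (hT.eq_of_dist_add_dist (u := v) (v := x) (by grind [SimpleGraph.dist_comm])
        (by grind [SimpleGraph.dist_comm]) (by grind [SimpleGraph.dist_comm])) hne
  have := hT.dist_eq_of_adj_of_dist_lt hy₂.symm (u := b) (v := v)
    (by grind [SimpleGraph.dist_comm]) (by grind [SimpleGraph.dist_comm])
  exact ⟨b, hbx, by grind [SimpleGraph.dist_comm]⟩

theorem degree_induce_ball_of_dist_lt (hG : IsPerfectUnrootedMary m D G)
    (hx : ∀ z, G.dist x z + k ≤ D) (v : {w | G.dist x w ≤ k}) (hv : G.dist x v < k) :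
    (G.induce {w | G.dist x w ≤ k}).degree v = m + 1 := by
  rw [degree_induce_of_neighborSet_subset, hG.degree_eq_of_dist_lt hx hv]
  intro z hz
  have := hG.1.connected.dist_triangle (u := x) (v := v) (w := z)
  rw [mem_neighborSet, ← dist_eq_one_iff_adj] at hz
  simp only [Set.mem_ofPred_eq]
  omega

theorem induce_ball (hG : IsPerfectUnrootedMary m D G) (hm : 0 < m)
    (hx : ∀ z, G.dist x z + k ≤ D) :
    IsPerfectUnrootedMary m (2 * k) (G.induce {w | G.dist x w ≤ k}) := by
  have hT := hG.1
  have hconv : ∀ u ∈ {w | G.dist x w ≤ k}, ∀ v ∈ {w | G.dist x w ≤ k}, ∀ w,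
      G.dist u w + G.dist w v = G.dist u v → w ∈ {w | G.dist x w ≤ k} :=
    fun u hu v hv w hw => (hT.dist_le_max_of_dist_add_dist hw x).trans (max_le hu hv)
  have hdist := hT.dist_induce hconv
  refine ⟨hT.induce hconv ⟨x, by simp⟩, fun hk v => ?_, fun u v => ?_, ?_, fun v hv => ?_⟩
  · rcases (show G.dist x v ≤ k from v.2).lt_or_eq with h | h
    · exact Or.inr (hG.degree_induce_ball_of_dist_lt hx v h)
    · exact Or.inl (hT.degree_induce_of_dist_eq (by omega) h)
  · have := hT.connected.dist_triangle (u := (u : W)) (v := x) (w := v)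
    have := u.2
    have := v.2
    simp only [Set.mem_ofPred_eq, hdist] at *
    grind [SimpleGraph.dist_comm]
  · obtain ⟨a, ha⟩ := hG.exists_dist_eq hm hx
    obtain ⟨b, hb, hab⟩ := hG.exists_dist_eq_two_mul hm hx ha
    exact ⟨⟨a, ha.le⟩, ⟨b, hb.le⟩, by rw [hdist, hab]⟩
  · have hvk : G.dist x v = k := by
      refine (show G.dist x v ≤ k from v.2).eq_of_not_lt fun h => ?_
      rw [hG.degree_induce_ball_of_dist_lt hx v h] at hv
      omega
    obtain ⟨b, hb, hvb⟩ := hG.exists_dist_eq_two_mul hm hx hvk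
    exact ⟨⟨b, hb.le⟩, by rw [hdist, SimpleGraph.dist_comm, hvb]⟩

end IsPerfectUnrootedMary

theorem unrooted_path_count_odd_general (m D : ℕ) (hm : 2 ≤ m)
    {W : Type} [Fintype W] [DecidableEq W] (G : SimpleGraph W) [DecidableRel G.Adj]
    (hG : IsPerfectUnrootedMary m D G)
    (Vf : ℕ → ℚ)
    (hVf : ∀ (d : ℕ) (X : Type) [Fintype X] (H : SimpleGraph X) [DecidableRel H.Adj],
      IsPerfectUnrootedMary m d H → (Fintype.card X : ℚ) = Vf d)
    (t : ℕ) (ht : Odd t) (htD : t ≤ D) :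
    (pathCount G t : ℚ) = (m : ℚ) ^ ((t - 1) / 2) * (Vf D - Vf (t - 1)) := by
  obtain ⟨k, rfl⟩ := ht
  obtain ⟨a, b, hab⟩ := hG.2.2.2.1
  obtain ⟨x, hx⟩ := hG.1.exists_forall_two_mul_dist_le hG.2.2.1 hab
  have hxk (z : W) : G.dist x z + k ≤ D := by have := hx z; omega
  have hball := hVf (2 * k) _ _ (hG.induce_ball (by omega) hxk)
  have hsplit : #{v | G.dist x v ≤ k} + #{v | k < G.dist x v} = Fintype.card W := by
    simpa using card_filter_add_card_filter_not (s := univ) fun v => G.dist x v ≤ k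
  simp only [Fintype.card_subtype, Set.mem_ofPred_eq] at hball
  rw [show 2 * k + 1 - 1 = 2 * k by omega, show 2 * k / 2 = k by omega, hG.pathCount_eq hxk,
    ← hVf D W G hG, ← hball, ← hsplit]
  push_cast
  ring

theorem unrooted_path_count_odd (m D : ℕ) (hm : 2 ≤ m)
    {W : Type} [Fintype W] [DecidableEq W] (G : SimpleGraph W) [DecidableRel G.Adj]
    (hG : IsPerfectUnrootedMary m D G)
    (Vf : ℕ → ℚ)
    (hVf : ∀ (d : ℕ) (X : Type) [Fintype X] (H : SimpleGraph X) [DecidableRel H.Adj],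
      IsPerfectUnrootedMary m d H → (Fintype.card X : ℚ) = Vf d)
    (t : ℕ) (ht : Odd t) (ht1 : 1 ≤ t) (htD : t ≤ D) :
    (pathCount G t : ℚ) = (m : ℚ) ^ ((t - 1) / 2) * (Vf D - Vf (t - 1)) :=
  unrooted_path_count_odd_general m D hm G hG Vf hVf t ht htD
end

section
/- Let m ≥ 2 and let T be the perfect rooted m-ary tree of depth r. If t is odd and 1 ≤ t ≤ r, then the number of paths of length t in T equals m^((t−1)/2) · (V_R(r) − V_R((t−1)/2)) − ((t−1)/2) · m^(t−1), where V_R(d) is the number of vertices in the perfect rooted m-ary tree of depth d. -/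
/-!
Root the tree at `ρ` and write `t = 2k + 1`. The two ends of a path of odd length have depths of
different parity, so each path is counted once from its deeper end `v`. The other end `u` is
reached by climbing `t - i` levels from `v` and descending `i ≤ k` levels into another branch:
exactly one `u` for `i = 0`, and `m ^ i - m ^ (i - 1)` of them for `i ≥ 1`. These counts telescope
to `m ^ k` when `depth v > 2k` and to `m ^ k - m ^ (2k - depth v)` when `k < depth v ≤ 2k`. Summing
over `v`, with `m ^ d` vertices at depth `d`, gives `m ^ k · #{v | depth v > k} - k · m ^ (2k)`,
and `#{v | depth v ≤ k} = V_R(k)` because these vertices induce the perfect tree of depth `k`.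
-/

open SimpleGraph Finset

/-- `IsPerfectRootedMary m r H ρ` says that `H` is the perfect rooted `m`-ary tree of
depth `r` with root `ρ`: a tree whose root `ρ` has degree `m`, in which every other
vertex has degree `1` or `m + 1`, whose maximum distance from `ρ` to a vertex is `r`,
and in which every degree-`1` vertex is at distance exactly `r` from `ρ`.
(For `r = 0` the root-degree condition is dropped, so that the one-vertex tree is the
perfect rooted tree of depth `0`.) -/
def IsPerfectRootedMary (m r : ℕ) {W : Type} [Fintype W] (H : SimpleGraph W)
    [DecidableRel H.Adj] (ρ : W) : Prop :=
  H.IsTree ∧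
    (0 < r → H.degree ρ = m) ∧
    (∀ v : W, v ≠ ρ → H.degree v = 1 ∨ H.degree v = m + 1) ∧
    (∀ v : W, H.dist ρ v ≤ r) ∧
    (∃ v : W, H.dist ρ v = r) ∧
    (∀ v : W, H.degree v = 1 → H.dist ρ v = r)

namespace SimpleGraph

variable {V : Type*} {G : SimpleGraph V} {ρ u v w : V}

lemma Walk.dist_le_length_of_mem_support [DecidableEq V] (p : G.Walk u v) (hw : w ∈ p.support) :
    G.dist u w ≤ p.length :=
  (dist_le _).trans (p.length_takeUntil_le_length hw)

lemma IsTree.length_eq_dist_s2 (hT : G.IsTree) {p : G.Walk u v} (hp : p.IsPath) :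
    p.length = G.dist u v := by
  obtain ⟨q, hq, hql⟩ := hT.connected.exists_path_of_dist u v
  rw [(hT.existsUnique_path u v).unique hp hq, hql]

open Classical in
/-- The neighbour of `v` one step closer to `ρ` (defaulting to `ρ` when there is none). -/
noncomputable def parent (G : SimpleGraph V) (ρ v : V) : V :=
  if h : ∃ u, G.Adj u v ∧ G.dist ρ u + 1 = G.dist ρ v then h.choose else ρ

lemma Connected.exists_adj_dist_add_one (hG : G.Connected) (hv : v ≠ ρ) :
    ∃ u, G.Adj u v ∧ G.dist ρ u + 1 = G.dist ρ v := by
  obtain ⟨p, hp⟩ := hG.exists_walk_length_eq_dist v ρ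
  cases p with
  | nil => exact absurd rfl hv
  | @cons _ u _ h q =>
    refine ⟨u, h.symm, le_antisymm ?_ ?_⟩
    · rw [dist_comm, dist_comm (u := ρ) (v := v), ← hp, Walk.length_cons]
      exact Nat.succ_le_succ (dist_le q)
    · calc G.dist ρ v ≤ G.dist ρ u + G.dist u v := hG.dist_triangle
        _ = G.dist ρ u + 1 := by rw [dist_eq_one_iff_adj.2 h.symm]

lemma Connected.adj_parent (hG : G.Connected) (hv : v ≠ ρ) : G.Adj (G.parent ρ v) v := by
  have h := hG.exists_adj_dist_add_one hv
  rw [parent, dif_pos h]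
  exact h.choose_spec.1

lemma Connected.dist_parent (hG : G.Connected) (v : V) :
    G.dist ρ (G.parent ρ v) = G.dist ρ v - 1 := by
  by_cases hv : v = ρ
  · simp [parent, hv]
  · have h := hG.exists_adj_dist_add_one hv
    rw [parent, dif_pos h]
    omega

lemma Connected.dist_parent_iterate (hG : G.Connected) (v : V) (i : ℕ) :
    G.dist ρ ((G.parent ρ)^[i] v) = G.dist ρ v - i := by
  induction i with
  | zero => rfl
  | succ i ih => rw [Function.iterate_succ_apply', hG.dist_parent, ih, Nat.sub_sub]

lemma Connected.parent_iterate_dist_eq_root (hG : G.Connected) (v : V) :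
    (G.parent ρ)^[G.dist ρ v] v = ρ := by
  rw [← hG.dist_eq_zero_iff, dist_comm, hG.dist_parent_iterate, Nat.sub_self]

lemma Connected.parent_iterate_ne_root (hG : G.Connected) {i : ℕ} (hi : i < G.dist ρ v) :
    (G.parent ρ)^[i] v ≠ ρ := by
  intro h
  have := hG.dist_parent_iterate (ρ := ρ) v i
  rw [h, dist_self] at this
  omega

lemma IsTree.dist_eq_add_one_or_of_adj (hT : G.IsTree) (h : G.Adj u v) :
    G.dist ρ v = G.dist ρ u + 1 ∨ G.dist ρ u = G.dist ρ v + 1 := by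
  obtain ⟨p, hp, hpl⟩ := hT.connected.exists_path_of_dist ρ u
  by_cases hv : v ∈ p.support
  · have hvp := hT.isAcyclic.eq_penultimate_of_adj_end hp h hv
    have hle : G.dist ρ v ≤ G.dist ρ u - 1 := by
      rw [← hpl, ← Walk.length_dropLast, hvp]
      exact dist_le _
    have htri : G.dist ρ u ≤ G.dist ρ v + 1 := by
      calc G.dist ρ u ≤ G.dist ρ v + G.dist v u := hT.connected.dist_triangle
        _ = G.dist ρ v + 1 := by rw [dist_eq_one_iff_adj.2 h.symm]
    have hu : G.dist ρ u ≠ 0 := fun hu => h.ne <|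
      (hT.connected.dist_eq_zero_iff.1 hu).symm.trans (hT.connected.dist_eq_zero_iff.1 (by omega))
    omega
  · left
    rw [← hT.length_eq_dist_s2 (hp.concat hv h), Walk.length_concat, hpl]

lemma IsTree.parent_eq_of_adj (hT : G.IsTree) (h : G.Adj u v) (hd : G.dist ρ u + 1 = G.dist ρ v) :
    G.parent ρ v = u := by
  classical
  have path_through : ∀ w, G.Adj w v → G.dist ρ w + 1 = G.dist ρ v →
      ∃ p : G.Walk ρ v, p.IsPath ∧ p.penultimate = w := by
    intro w hw hwd
    obtain ⟨p, hp, hpl⟩ := hT.connected.exists_path_of_dist ρ w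
    have hv : v ∉ p.support := fun hv => by
      have := p.dist_le_length_of_mem_support hv
      omega
    exact ⟨p.concat hw, hp.concat hv hw, p.penultimate_concat hw⟩
  have hv : v ≠ ρ := by rintro rfl; simp at hd
  obtain ⟨p, hp, rfl⟩ := path_through u h hd
  obtain ⟨q, hq, hq'⟩ := path_through _ (hT.connected.adj_parent hv)
    (by rw [hT.connected.dist_parent]; omega)
  rw [← hq', (hT.existsUnique_path ρ v).unique hq hp]

lemma IsTree.eq_parent_of_adj_of_dist_le (hT : G.IsTree) (h : G.Adj u v)
    (hd : G.dist ρ u ≤ G.dist ρ v) :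
    u = G.parent ρ v := by
  rcases hT.dist_eq_add_one_or_of_adj (ρ := ρ) h with hd' | hd'
  · exact (hT.parent_eq_of_adj h hd'.symm).symm
  · omega

lemma Connected.injOn_parent_iterate (hG : G.Connected) (v : V) :
    Set.InjOn (fun a => (G.parent ρ)^[a] v) (Set.Iic (G.dist ρ v)) := fun a ha b hb h => by
  have := congrArg (G.dist ρ) h
  simp only [hG.dist_parent_iterate] at this
  simp only [Set.mem_Iic] at ha hb
  omega

lemma Connected.exists_walk_support_parent_iterate (hG : G.Connected) (v : V) {i : ℕ}
    (hi : i ≤ G.dist ρ v) :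
    ∃ p : G.Walk v ((G.parent ρ)^[i] v), p.length = i ∧
      p.support = (List.range (i + 1)).map fun a => (G.parent ρ)^[a] v := by
  induction i with
  | zero => exact ⟨.nil, rfl, rfl⟩
  | succ i ih =>
    obtain ⟨p, hpl, hp⟩ := ih (by omega)
    have hadj := hG.adj_parent (hG.parent_iterate_ne_root (ρ := ρ) (v := v) (i := i) (by omega))
    refine ⟨(p.concat hadj.symm).copy rfl (Function.iterate_succ_apply' _ _ _).symm, ?_, ?_⟩
    · rw [Walk.length_copy, Walk.length_concat, hpl]
    · rw [Walk.support_copy, Walk.support_concat, hp, List.range_succ (n := i + 1),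
        List.map_append, List.map_singleton, Function.iterate_succ_apply']

lemma Connected.parent_iterate_ne_of_lt (hG : G.Connected) {i j a b : ℕ}
    (hi : i ≤ G.dist ρ u) (hj : j ≤ G.dist ρ v)
    (h : (G.parent ρ)^[i] u = (G.parent ρ)^[j] v)
    (hmin : i = 0 ∨ j = 0 ∨ (G.parent ρ)^[i - 1] u ≠ (G.parent ρ)^[j - 1] v)
    (ha : a ≤ i) (hb : b < j) : (G.parent ρ)^[a] u ≠ (G.parent ρ)^[b] v := by
  intro hab
  have hd := congrArg (G.dist ρ) h
  have hd' := congrArg (G.dist ρ) hab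
  simp only [hG.dist_parent_iterate] at hd hd'
  rcases hmin with hi0 | hj0 | hne
  · omega
  · omega
  · apply hne
    have e1 : i - 1 = (i - 1 - a) + a := by omega
    have e2 : j - 1 = (i - 1 - a) + b := by omega
    rw [e1, Function.iterate_add_apply, hab, ← Function.iterate_add_apply, ← e2]

/-- `hmin` makes `(G.parent ρ)^[i] u` the lowest common ancestor of `u` and `v`, so climbing `i`
levels from `u` and then descending `j` levels to `v` is a path, hence a geodesic in a tree. -/
theorem IsTree.dist_eq_add_of_parent_iterate_eq (hT : G.IsTree) {i j : ℕ}
    (hi : i ≤ G.dist ρ u) (hj : j ≤ G.dist ρ v)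
    (h : (G.parent ρ)^[i] u = (G.parent ρ)^[j] v)
    (hmin : i = 0 ∨ j = 0 ∨ (G.parent ρ)^[i - 1] u ≠ (G.parent ρ)^[j - 1] v) :
    G.dist u v = i + j := by
  obtain ⟨p, hpl, hp⟩ := hT.connected.exists_walk_support_parent_iterate u hi
  obtain ⟨q, hql, hq⟩ := hT.connected.exists_walk_support_parent_iterate v hj
  let w := p.append (q.copy rfl h.symm).reverse
  have hw : w.IsPath := by
    rw [Walk.isPath_def, Walk.support_append, Walk.support_reverse, Walk.support_copy, hp, hq,
      List.range_succ (n := j), List.map_append, List.reverse_append]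
    simp only [List.map_cons, List.map_nil, List.reverse_cons, List.reverse_nil, List.nil_append,
      List.cons_append, List.tail_cons]
    refine List.nodup_append.2 ⟨?_, ?_, ?_⟩
    · refine List.nodup_range.map_on fun a ha b hb => hT.connected.injOn_parent_iterate u ?_ ?_
      all_goals simp only [List.mem_range, Set.mem_Iic] at *; omega
    · refine List.nodup_reverse.2 (List.nodup_range.map_on fun a ha b hb =>
        hT.connected.injOn_parent_iterate v ?_ ?_)
      all_goals simp only [List.mem_range, Set.mem_Iic] at *; omega
    · simp only [List.mem_map, List.mem_range, List.mem_reverse]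
      rintro _ ⟨a, ha, rfl⟩ _ ⟨b, hb, rfl⟩
      exact hT.connected.parent_iterate_ne_of_lt hi hj h hmin (by omega) hb
  rw [← hT.length_eq_dist_s2 hw, Walk.length_append, Walk.length_reverse, Walk.length_copy, hpl, hql]

lemma Connected.exists_parent_iterate_eq (hG : G.Connected) (u v : V) :
    ∃ i j, i ≤ G.dist ρ u ∧ j ≤ G.dist ρ v ∧
      (G.parent ρ)^[i] u = (G.parent ρ)^[j] v ∧
      (i = 0 ∨ j = 0 ∨ (G.parent ρ)^[i - 1] u ≠ (G.parent ρ)^[j - 1] v) := by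
  classical
  have hex : ∃ i, ∃ j ≤ G.dist ρ v, (G.parent ρ)^[i] u = (G.parent ρ)^[j] v :=
    ⟨_, _, le_rfl, by rw [hG.parent_iterate_dist_eq_root, hG.parent_iterate_dist_eq_root]⟩
  obtain ⟨j, hj, hij⟩ := Nat.find_spec hex
  refine ⟨Nat.find hex, j, Nat.find_min' hex ⟨_, le_rfl, ?_⟩, hj, hij, ?_⟩
  · rw [hG.parent_iterate_dist_eq_root, hG.parent_iterate_dist_eq_root]
  · by_contra! hcon
    exact Nat.find_min hex (Nat.sub_one_lt hcon.1) ⟨j - 1, by omega, hcon.2.2⟩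

lemma IsTree.dist_ne_dist_of_odd (hT : G.IsTree) (h : Odd (G.dist u v)) :
    G.dist ρ u ≠ G.dist ρ v := by
  obtain ⟨i, j, hi, hj, hij, hmin⟩ := hT.connected.exists_parent_iterate_eq (ρ := ρ) u v
  have hd := congrArg (G.dist ρ) hij
  rw [hT.connected.dist_parent_iterate, hT.connected.dist_parent_iterate] at hd
  rw [hT.dist_eq_add_of_parent_iterate_eq hi hj hij hmin] at h
  obtain ⟨n, hn⟩ := h
  omega

section Descendants

variable [Fintype V] [DecidableEq V]

variable (G ρ) in
noncomputable def descendants (w : V) (s : ℕ) : Finset V :=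
  {u | (G.parent ρ)^[s] u = w ∧ G.dist ρ u = G.dist ρ w + s}

variable (G ρ) in
/-- The vertices reached from `v` by climbing `j` levels and then descending `i` levels into
another branch. -/
noncomputable def upDown (v : V) (j i : ℕ) : Finset V :=
  {u | (G.parent ρ)^[i] u = (G.parent ρ)^[j] v ∧ G.dist ρ u + j = G.dist ρ v + i ∧
    (i = 0 ∨ (G.parent ρ)^[i - 1] u ≠ (G.parent ρ)^[j - 1] v)}

lemma mem_descendants {s : ℕ} :
    u ∈ G.descendants ρ w s ↔ (G.parent ρ)^[s] u = w ∧ G.dist ρ u = G.dist ρ w + s := by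
  simp [descendants]

lemma mem_upDown {j i : ℕ} :
    u ∈ G.upDown ρ v j i ↔ (G.parent ρ)^[i] u = (G.parent ρ)^[j] v ∧
      G.dist ρ u + j = G.dist ρ v + i ∧
      (i = 0 ∨ (G.parent ρ)^[i - 1] u ≠ (G.parent ρ)^[j - 1] v) := by
  simp [upDown]

lemma descendants_zero : G.descendants ρ w 0 = {w} := by
  ext u
  simp only [mem_descendants, Function.iterate_zero_apply, add_zero, mem_singleton]
  exact ⟨And.left, fun h => ⟨h, h ▸ rfl⟩⟩

lemma Connected.descendants_root (hG : G.Connected) (d : ℕ) :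
    G.descendants ρ ρ d = ({v | G.dist ρ v = d} : Finset V) := by
  ext v
  rw [mem_descendants, dist_self, zero_add, mem_filter_univ]
  exact ⟨And.right, fun hv => ⟨hv ▸ hG.parent_iterate_dist_eq_root v, hv⟩⟩

lemma Connected.descendants_succ (hG : G.Connected) (w : V) (s : ℕ) :
    G.descendants ρ w (s + 1) = (G.descendants ρ w s).biUnion (G.descendants ρ · 1) := by
  ext u
  simp only [mem_biUnion, mem_descendants, Function.iterate_one]
  constructor
  · rintro ⟨hu, hd⟩
    refine ⟨G.parent ρ u, ⟨hu, ?_⟩, rfl, ?_⟩ <;> rw [hG.dist_parent] <;> omega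
  · rintro ⟨z, ⟨hz, hzd⟩, rfl, hd⟩
    exact ⟨hz, by omega⟩

lemma Connected.descendants_subset_parent (hG : G.Connected) (hw : w ≠ ρ) (s : ℕ) :
    G.descendants ρ w s ⊆ G.descendants ρ (G.parent ρ w) (s + 1) := by
  have := hG.pos_dist_of_ne hw.symm
  intro u hu
  rw [mem_descendants] at hu ⊢
  rw [Function.iterate_succ_apply', hu.1, hG.dist_parent]
  exact ⟨rfl, by omega⟩

lemma IsTree.degree_eq_card_descendants [DecidableRel G.Adj] (hT : G.IsTree) (v : V) :
    G.degree v = #(G.descendants ρ v 1) + if v = ρ then 0 else 1 := by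
  rw [← card_neighborFinset_eq_degree,
    ← card_filter_add_card_filter_not (fun w => G.dist ρ w = G.dist ρ v + 1)]
  congr 1
  · congr 1
    ext w
    simp only [mem_filter, mem_neighborFinset, mem_descendants, Function.iterate_one]
    constructor
    · rintro ⟨h, hd⟩
      exact ⟨hT.parent_eq_of_adj h hd.symm, hd⟩
    · rintro ⟨rfl, hd⟩
      refine ⟨hT.connected.adj_parent ?_, hd⟩
      rintro rfl
      simp at hd
  · split_ifs with hv
    · simp [card_eq_zero, filter_eq_empty_iff, hv]
    · rw [card_eq_one]
      refine ⟨G.parent ρ v, ext fun w => ?_⟩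
      simp only [mem_filter, mem_neighborFinset, mem_singleton]
      constructor
      · rintro ⟨h, hd⟩
        refine hT.eq_parent_of_adj_of_dist_le h.symm ?_
        rcases hT.dist_eq_add_one_or_of_adj (ρ := ρ) h with h' | h' <;> omega
      · rintro rfl
        refine ⟨(hT.connected.adj_parent hv).symm, ?_⟩
        rw [hT.connected.dist_parent]
        omega

lemma Connected.upDown_zero (hG : G.Connected) {j : ℕ} (hj : j ≤ G.dist ρ v) :
    G.upDown ρ v j 0 = {(G.parent ρ)^[j] v} := by
  ext u
  simp only [mem_upDown, Function.iterate_zero_apply, mem_singleton, true_or, and_true]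
  refine ⟨And.left, fun hu => ⟨hu, ?_⟩⟩
  rw [hu, hG.dist_parent_iterate]
  omega

lemma Connected.upDown_eq_sdiff (hG : G.Connected) {i j : ℕ} (hi : 0 < i) (hij : i ≤ j)
    (hj : j ≤ G.dist ρ v) :
    G.upDown ρ v j i = G.descendants ρ ((G.parent ρ)^[j] v) i \
      G.descendants ρ ((G.parent ρ)^[j - 1] v) (i - 1) := by
  ext u
  simp only [mem_upDown, mem_sdiff, mem_descendants, hG.dist_parent_iterate]
  constructor
  · rintro ⟨hu, hd, hne⟩
    exact ⟨⟨hu, by omega⟩, fun h => hne.resolve_left hi.ne' h.1⟩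
  · rintro ⟨⟨hu, hd⟩, hne⟩
    exact ⟨hu, by omega, Or.inr fun h => hne ⟨h, by omega⟩⟩

lemma IsTree.dist_eq_and_lt_iff (hT : G.IsTree) {t : ℕ} :
    G.dist u v = t ∧ G.dist ρ u < G.dist ρ v ↔
      ∃ i, 2 * i < t ∧ t ≤ G.dist ρ v + i ∧ u ∈ G.upDown ρ v (t - i) i := by
  simp only [mem_upDown]
  constructor
  · rintro ⟨rfl, hlt⟩
    obtain ⟨i, j, hi, hj, h, hmin⟩ := hT.connected.exists_parent_iterate_eq (ρ := ρ) u v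
    have hd := congrArg (G.dist ρ) h
    rw [hT.connected.dist_parent_iterate, hT.connected.dist_parent_iterate] at hd
    rw [hT.dist_eq_add_of_parent_iterate_eq hi hj h hmin]
    refine ⟨i, ?_⟩
    rw [Nat.add_sub_cancel_left]
    exact ⟨by omega, by omega, h, by omega, hmin.imp_right (Or.resolve_left · (by omega))⟩
  · rintro ⟨i, hit, htv, h, hd, hmin⟩
    rw [hT.dist_eq_add_of_parent_iterate_eq (by omega) (by omega) h (hmin.imp_right Or.inr)]
    omega

lemma IsTree.filter_dist_eq_and_lt_eq_biUnion (hT : G.IsTree) {k : ℕ} (v : V) :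
    ({u | G.dist u v = 2 * k + 1 ∧ G.dist ρ u < G.dist ρ v} : Finset V) =
      (Icc (2 * k + 1 - G.dist ρ v) k).biUnion fun i => G.upDown ρ v (2 * k + 1 - i) i := by
  ext u
  simp only [mem_filter_univ, hT.dist_eq_and_lt_iff, mem_biUnion, mem_Icc]
  refine exists_congr fun i => ⟨fun ⟨h1, h2, hu⟩ => ⟨⟨by omega, by omega⟩, hu⟩,
    fun ⟨⟨h1, h2⟩, hu⟩ => ⟨by omega, by omega, hu⟩⟩

end Descendants

section Truncation

variable {k : ℕ}

lemma Connected.exists_walk_induce_setOf_dist_le (hG : G.Connected) (v : {v | G.dist ρ v ≤ k}) :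
    ∃ p : (G.induce {v | G.dist ρ v ≤ k}).Walk ⟨ρ, by simp⟩ v,
      p.length = G.dist ρ v := by
  classical
  obtain ⟨p, hpl⟩ := hG.exists_walk_length_eq_dist ρ v
  have hp : ∀ x ∈ p.support, x ∈ {v | G.dist ρ v ≤ k} := fun x hx =>
    (p.dist_le_length_of_mem_support hx).trans (hpl ▸ v.2)
  refine ⟨p.induce _ hp, ?_⟩
  have := congrArg Walk.length (p.map_induce hp)
  rw [Walk.length_map] at this
  exact this.trans hpl

lemma Connected.induce_setOf_dist_le (hG : G.Connected) :
    (G.induce {v | G.dist ρ v ≤ k}).Connected :=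
  (connected_iff_exists_forall_reachable _).2
    ⟨_, fun v => (hG.exists_walk_induce_setOf_dist_le v).elim fun p _ => p.reachable⟩

lemma Connected.dist_induce_setOf_dist_le (hG : G.Connected) (v : {v | G.dist ρ v ≤ k}) :
    (G.induce {v | G.dist ρ v ≤ k}).dist ⟨ρ, by simp⟩ v = G.dist ρ v := by
  obtain ⟨p, hp⟩ := hG.exists_walk_induce_setOf_dist_le v
  obtain ⟨q, hq⟩ := hG.induce_setOf_dist_le.exists_walk_length_eq_dist ⟨ρ, by simp⟩ v
  refine le_antisymm (hp ▸ dist_le p) ?_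
  rw [← hq, ← Walk.length_map (Embedding.induce _).toHom]
  exact dist_le _

variable [Fintype V] [DecidableRel G.Adj]

lemma degree_induce_setOf_dist_le_of_lt (v : {v | G.dist ρ v ≤ k}) (hv : G.dist ρ v < k) :
    (G.induce {v | G.dist ρ v ≤ k}).degree v = G.degree v :=
  degree_induce_of_neighborSet_subset fun w hw => by
    have := (mem_neighborSet _ _ _).1 hw |>.diff_dist_adj (u := ρ)
    simp only [Set.mem_ofPred_eq]
    omega

lemma IsTree.degree_induce_setOf_dist_le_of_eq [DecidableEq V] (hT : G.IsTree)
    (v : {v | G.dist ρ v ≤ k}) (hv : G.dist ρ v = k) (hk : 0 < k) :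
    (G.induce {v | G.dist ρ v ≤ k}).degree v = 1 := by
  have hvρ : (v : V) ≠ ρ := by rintro h; rw [h, dist_self] at hv; omega
  rw [← card_neighborFinset_eq_degree, ← card_map, map_neighborFinset_induce, card_eq_one]
  refine ⟨G.parent ρ v, ext fun w => ?_⟩
  simp only [mem_inter, mem_neighborFinset, Set.mem_toFinset, Set.mem_ofPred_eq, mem_singleton]
  constructor
  · rintro ⟨h, hw⟩
    exact hT.eq_parent_of_adj_of_dist_le h.symm (by omega)
  · rintro rfl
    refine ⟨(hT.connected.adj_parent hvρ).symm, ?_⟩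
    rw [hT.connected.dist_parent]
    omega

end Truncation

end SimpleGraph

lemma sum_Ioc_add_pow_eq_pow {m b n : ℕ} {g : ℕ → ℕ} (hbn : b ≤ n)
    (hg : ∀ i ∈ Ioc b n, g i + m ^ (i - 1) = m ^ i) :
    ∑ i ∈ Ioc b n, g i + m ^ b = m ^ n := by
  induction n, hbn using Nat.le_induction with
  | base => simp
  | succ n hbn ih =>
    have hn := hg (n + 1) (by simp [hbn])
    rw [Nat.add_sub_cancel] at hn
    rw [sum_Ioc_succ_top hbn, add_right_comm,
      ih fun i hi => hg i (Ioc_subset_Ioc_right n.le_succ hi), add_comm, hn]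

lemma pathCount_eq_sum_card {W : Type} [Fintype W] [DecidableEq W] (H : SimpleGraph W) (t : ℕ)
    (f : W → ℕ) (hf : ∀ u v, H.dist u v = t → f u ≠ f v) :
    pathCount H t = ∑ v, #({u | H.dist u v = t ∧ f u < f v} : Finset W) := by
  have hpairs :
      pathCount H t = #({p : W × W | H.dist p.1 p.2 = t ∧ f p.1 < f p.2} : Finset _) := by
    refine (card_bij (fun p _ => s(p.1, p.2)) ?_ ?_ ?_).symm
    · rintro ⟨u, v⟩ hp
      simp only [mem_filter_univ] at hp ⊢
      exact ⟨u, v, rfl, hp.1⟩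
    · rintro ⟨u, v⟩ hp ⟨u', v'⟩ hp' h
      simp only [mem_filter_univ, Sym2.eq_iff] at hp hp' h
      rcases h with ⟨rfl, rfl⟩ | ⟨rfl, rfl⟩
      · rfl
      · omega
    · intro z hz
      obtain ⟨u, v, rfl, hd⟩ := (mem_filter_univ _).1 hz
      rcases (hf u v hd).lt_or_gt with h | h
      · exact ⟨(u, v), by simp [hd, h], rfl⟩
      · exact ⟨(v, u), by simp [dist_comm, hd, h], Sym2.eq_swap⟩
  rw [hpairs, card_filter, Fintype.sum_prod_type_right]
  simp only [card_filter]

namespace IsPerfectRootedMary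

variable {m r : ℕ} {W : Type} [Fintype W] [DecidableEq W] {G : SimpleGraph W}
  [DecidableRel G.Adj] {ρ v w : W}

lemma card_children (hG : IsPerfectRootedMary m r G ρ) (hv : G.dist ρ v < r) :
    #(G.descendants ρ v 1) = m := by
  obtain ⟨hT, hroot, hdeg, -, -, hleaf⟩ := hG
  have hdeg_eq := hT.degree_eq_card_descendants (ρ := ρ) v
  by_cases hvρ : v = ρ
  · subst hvρ
    rw [if_pos rfl, hroot (by omega)] at hdeg_eq
    omega
  · rw [if_neg hvρ] at hdeg_eq
    rcases hdeg v hvρ with h | h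
    · have := hleaf v h
      omega
    · omega

lemma card_descendants (hG : IsPerfectRootedMary m r G ρ) {s : ℕ}
    (h : G.dist ρ w + s ≤ r) : #(G.descendants ρ w s) = m ^ s := by
  induction s with
  | zero => rw [descendants_zero, card_singleton, pow_zero]
  | succ s ih =>
    have hchildren : ∀ z ∈ G.descendants ρ w s, #(G.descendants ρ z 1) = m := fun z hz =>
      hG.card_children (by rw [(mem_descendants.1 hz).2]; omega)
    rw [hG.1.connected.descendants_succ, card_biUnion, sum_congr rfl hchildren, sum_const,
      ih (by omega), smul_eq_mul, pow_succ]
    intro z _ z' _ hzz'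
    simp only [Function.onFun, Finset.disjoint_left, mem_descendants, Function.iterate_one]
    rintro u ⟨rfl, -⟩ ⟨rfl, -⟩
    exact hzz' rfl

lemma card_level (hG : IsPerfectRootedMary m r G ρ) {d : ℕ} (hd : d ≤ r) :
    #({v | G.dist ρ v = d} : Finset W) = m ^ d := by
  rw [← hG.1.connected.descendants_root, hG.card_descendants (by simpa)]

lemma sum_comp_dist (hG : IsPerfectRootedMary m r G ρ) (f : ℕ → ℕ) :
    ∑ v, f (G.dist ρ v) = ∑ d ∈ range (r + 1), m ^ d * f d := by
  rw [← sum_fiberwise_of_maps_to (g := G.dist ρ) (t := range (r + 1))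
    fun v _ => mem_range.2 (Nat.lt_succ_of_le (hG.2.2.2.1 v))]
  refine sum_congr rfl fun d hd => ?_
  rw [sum_congr rfl fun v hv => by rw [(mem_filter.1 hv).2], sum_const,
    hG.card_level (Nat.lt_succ_iff.1 (mem_range.1 hd)), smul_eq_mul]

lemma card_upDown_add (hG : IsPerfectRootedMary m r G ρ) {i j : ℕ} (hi : 0 < i) (hij : i ≤ j)
    (hj : j ≤ G.dist ρ v) : #(G.upDown ρ v j i) + m ^ (i - 1) = m ^ i := by
  have hG' := hG.1.connected
  have hne : (G.parent ρ)^[j - 1] v ≠ ρ := hG'.parent_iterate_ne_root (by omega)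
  have hsub : G.descendants ρ ((G.parent ρ)^[j - 1] v) (i - 1) ⊆
      G.descendants ρ ((G.parent ρ)^[j] v) i := by
    have h := hG'.descendants_subset_parent hne (i - 1)
    rwa [← Function.iterate_succ_apply' (G.parent ρ), Nat.succ_eq_add_one,
      Nat.sub_add_cancel (by omega : 1 ≤ j), Nat.sub_add_cancel hi] at h
  have hv := hG.2.2.2.1 v
  have h1 := hG.card_descendants (s := i - 1) (w := (G.parent ρ)^[j - 1] v)
    (by rw [hG'.dist_parent_iterate]; omega)
  have h2 := hG.card_descendants (s := i) (w := (G.parent ρ)^[j] v)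
    (by rw [hG'.dist_parent_iterate]; omega)
  rw [hG'.upDown_eq_sdiff hi hij hj, ← h1, card_sdiff_add_card_eq_card hsub, h2]

lemma card_filter_dist_eq_and_lt_add (hG : IsPerfectRootedMary m r G ρ) {k : ℕ}
    (hkv : k < G.dist ρ v) :
    #({u | G.dist u v = 2 * k + 1 ∧ G.dist ρ u < G.dist ρ v} : Finset W) +
      (if G.dist ρ v ≤ 2 * k then m ^ (2 * k - G.dist ρ v) else 0) = m ^ k := by
  have hT := hG.1
  have hg : ∀ i ∈ Ioc (2 * k - G.dist ρ v) k,
      #(G.upDown ρ v (2 * k + 1 - i) i) + m ^ (i - 1) = m ^ i := fun i hi => by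
    rw [mem_Ioc] at hi
    exact hG.card_upDown_add (by omega) (by omega) (by omega)
  rw [hT.filter_dist_eq_and_lt_eq_biUnion, card_biUnion]
  · split_ifs with h
    · rw [show Icc (2 * k + 1 - G.dist ρ v) k = Ioc (2 * k - G.dist ρ v) k by ext; simp; omega]
      exact sum_Ioc_add_pow_eq_pow (by omega) hg
    · rw [Nat.sub_eq_zero_of_le (by omega : 2 * k ≤ G.dist ρ v)] at hg
      rw [Nat.sub_eq_zero_of_le (by omega : 2 * k + 1 ≤ G.dist ρ v),
        Icc_eq_cons_Ioc (Nat.zero_le k), sum_cons, Nat.sub_zero,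
        hT.connected.upDown_zero (by omega), card_singleton]
      have := sum_Ioc_add_pow_eq_pow (Nat.zero_le k) hg
      rw [pow_zero] at this
      omega
  · intro i hi i' hi' hii'
    simp only [Function.onFun, Finset.disjoint_left, mem_upDown]
    rintro u ⟨-, hd, -⟩ ⟨-, hd', -⟩
    simp only [coe_Icc, Set.mem_Icc] at hi hi'
    omega

lemma induce_setOf_dist_le (hG : IsPerfectRootedMary m r G ρ) {k : ℕ} (hk : k ≤ r) :
    IsPerfectRootedMary m k (G.induce {v | G.dist ρ v ≤ k}) ⟨ρ, by simp⟩ := by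
  obtain ⟨hT, hroot, hdeg, hdist, ⟨w, hw⟩, hleaf⟩ := hG
  have hdist' := hT.connected.dist_induce_setOf_dist_le (ρ := ρ) (k := k)
  refine ⟨(isTree_iff _).2 ⟨hT.connected.induce_setOf_dist_le, hT.isAcyclic.induce _⟩,
    fun hk0 => ?_, fun v hv => ?_, fun v => (hdist' v).trans_le v.2,
    ⟨⟨(G.parent ρ)^[r - k] w, ?_⟩, ?_⟩, fun v hv => ?_⟩
  · rw [degree_induce_setOf_dist_le_of_lt _ (by simpa), hroot (by omega)]
  · have hvk : G.dist ρ v ≤ k := v.2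
    rcases hvk.lt_or_eq with hlt | heq
    · rw [degree_induce_setOf_dist_le_of_lt v hlt]
      exact hdeg v fun h => hv (Subtype.ext h)
    · have hk0 : 0 < k := by
        by_contra hk0
        exact hv <| Subtype.ext
          (hT.connected.dist_eq_zero_iff.1 (show G.dist ρ v = 0 by omega)).symm
      exact Or.inl (hT.degree_induce_setOf_dist_le_of_eq v heq hk0)
  · change G.dist ρ _ ≤ k
    rw [hT.connected.dist_parent_iterate, hw]
    omega
  · rw [hdist', hT.connected.dist_parent_iterate, hw]
    omega
  · rw [hdist']
    by_contra hne
    have hvk : G.dist ρ v ≤ k := v.2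
    rw [degree_induce_setOf_dist_le_of_lt v (lt_of_le_of_ne hvk hne)] at hv
    have := hleaf v hv
    omega

lemma sum_ite_pow_sub_dist (hG : IsPerfectRootedMary m r G ρ) {k : ℕ} (hkr : 2 * k < r) :
    ∑ v, (if k < G.dist ρ v ∧ G.dist ρ v ≤ 2 * k then m ^ (2 * k - G.dist ρ v) else 0) =
      k * m ^ (2 * k) := by
  rw [hG.sum_comp_dist fun d => if k < d ∧ d ≤ 2 * k then m ^ (2 * k - d) else 0]
  calc _ = ∑ d ∈ range (r + 1), if d ∈ Ioc k (2 * k) then m ^ (2 * k) else 0 := by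
        refine sum_congr rfl fun d _ => ?_
        simp only [mem_Ioc, mul_ite, mul_zero, ← pow_add]
        split_ifs with h <;> first | rfl | (congr 1; omega)
    _ = k * m ^ (2 * k) := by
      rw [sum_ite_mem, inter_eq_right.2 fun d hd => by simp at hd ⊢; omega, sum_const,
        Nat.card_Ioc, smul_eq_mul]
      congr 1
      omega

lemma pathCount_two_mul_add_one_add (hG : IsPerfectRootedMary m r G ρ) {k : ℕ}
    (hkr : 2 * k < r) :
    pathCount G (2 * k + 1) + k * m ^ (2 * k) =
      m ^ k * #({v | k < G.dist ρ v} : Finset W) := by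
  have hT := hG.1
  have hvertex : ∀ v, #({u | G.dist u v = 2 * k + 1 ∧ G.dist ρ u < G.dist ρ v} : Finset W) +
      (if k < G.dist ρ v ∧ G.dist ρ v ≤ 2 * k then m ^ (2 * k - G.dist ρ v) else 0) =
      if k < G.dist ρ v then m ^ k else 0 := by
    intro v
    by_cases hkv : k < G.dist ρ v
    · simpa [hkv] using hG.card_filter_dist_eq_and_lt_add hkv
    · simp only [hkv, false_and, if_false, add_zero, card_eq_zero, filter_eq_empty_iff]
      rintro u - ⟨hd, hlt⟩
      have := hT.connected.dist_triangle (u := u) (v := ρ) (w := v)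
      rw [dist_comm (u := u) (v := ρ)] at this
      omega
  rw [pathCount_eq_sum_card G _ (G.dist ρ) fun u v h =>
      hT.dist_ne_dist_of_odd (h ▸ odd_two_mul_add_one k),
    ← hG.sum_ite_pow_sub_dist hkr, ← sum_add_distrib, sum_congr rfl fun v _ => hvertex v,
    sum_ite, sum_const_zero, add_zero, sum_const, smul_eq_mul, mul_comm]

end IsPerfectRootedMary

theorem rooted_path_count_odd_small_general (m r : ℕ)
    {W : Type} [Fintype W] [DecidableEq W] (G : SimpleGraph W) [DecidableRel G.Adj]
    (ρ : W) (hG : IsPerfectRootedMary m r G ρ)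
    (VR : ℕ → ℚ)
    (hVR : ∀ (d : ℕ) (X : Type) [Fintype X] (H : SimpleGraph X) [DecidableRel H.Adj]
      (ρ' : X), IsPerfectRootedMary m d H ρ' → (Fintype.card X : ℚ) = VR d)
    (t : ℕ) (ht : Odd t) (htr : t ≤ r) :
    (pathCount G t : ℚ) =
      (m : ℚ) ^ ((t - 1) / 2) * (VR r - VR ((t - 1) / 2)) -
        (((t - 1) / 2 : ℕ) : ℚ) * (m : ℚ) ^ (t - 1) := by
  obtain ⟨k, rfl⟩ := ht
  have hVRr : VR r = Fintype.card W := (hVR r W G ρ hG).symm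
  have hVRk : VR k = #({v | G.dist ρ v ≤ k} : Finset W) := by
    rw [← hVR k _ _ _ (hG.induce_setOf_dist_le (by omega)), Fintype.card_subtype]
    rfl
  have hcount : (pathCount G (2 * k + 1) : ℚ) + k * m ^ (2 * k) =
      m ^ k * #({v | k < G.dist ρ v} : Finset W) := by
    exact_mod_cast hG.pathCount_two_mul_add_one_add (k := k) (by omega)
  have hsplit := card_filter_add_card_filter_not (s := univ) fun v => G.dist ρ v ≤ k
  simp only [not_le, card_univ] at hsplit
  rw [show (2 * k + 1 - 1) / 2 = k by omega, show 2 * k + 1 - 1 = 2 * k by omega, hVRr, hVRk,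
    ← hsplit]
  push_cast
  linear_combination hcount

theorem rooted_path_count_odd_small (m r : ℕ) (hm : 2 ≤ m)
    {W : Type} [Fintype W] [DecidableEq W] (G : SimpleGraph W) [DecidableRel G.Adj]
    (ρ : W) (hG : IsPerfectRootedMary m r G ρ)
    (VR : ℕ → ℚ)
    (hVR : ∀ (d : ℕ) (X : Type) [Fintype X] (H : SimpleGraph X) [DecidableRel H.Adj]
      (ρ' : X), IsPerfectRootedMary m d H ρ' → (Fintype.card X : ℚ) = VR d)
    (t : ℕ) (ht : Odd t) (ht1 : 1 ≤ t) (htr : t ≤ r) :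
    (pathCount G t : ℚ) =
      (m : ℚ) ^ ((t - 1) / 2) * (VR r - VR ((t - 1) / 2)) -
        (((t - 1) / 2 : ℕ) : ℚ) * (m : ℚ) ^ (t - 1) :=
  rooted_path_count_odd_small_general m r G ρ hG VR hVR t ht htr
end
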